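/- arXiv:1701.03745 — 5 statements merged into one kernel-verified Lean document; each statement's English description precedes it below -/
import Mathlib

section
/- For a set-valued mapping Γ : T → Set ℝ^d, the interior of its graph is contained in the graph of t ↦ interior(liminf Γ at t); that is, if (t,x) ∈ interior{(t,x) | x ∈ Γ t}, then x ∈ interior(liminf Γ at t). -/
def setLimInf {T X : Type*} [TopologicalSpace T] [TopologicalSpace X]
    (S : T → Set X) (t : T) : Set X :=
  {x | ∀ A : Set X, IsOpen A → x ∈ A → {t' | (S t' ∩ A).Nonempty} ∈ nhds t}

theorem interior_graph_subset {d : ℕ} {T : Type*} [TopologicalSpace T]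
    (Γ : T → Set (Fin d → ℝ)) (t : T) (x : Fin d → ℝ)
    (h : (t, x) ∈ interior {p : T × (Fin d → ℝ) | p.2 ∈ Γ p.1}) :
    x ∈ interior (setLimInf Γ t) := by
  rw [mem_interior_iff_mem_nhds, nhds_prod_eq, Filter.mem_prod_iff] at h
  obtain ⟨U, hU, V, hV, hUV⟩ := h
  rw [mem_interior_iff_mem_nhds]
  apply Filter.mem_of_superset hV
  intro y hy A _ hyA
  apply Filter.mem_of_superset hU
  intro t' ht'
  exact ⟨y, hUV (Set.mk_mem_prod ht' hy), hyA⟩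
end

section
/- Let T be a topological space and S : T → Set ℝ^d. If S is μ-continuous in the sense that for every t there is a topology τ̄ finer than the topology of T such that the image closure of S is both inner and outer semicontinuous with respect to τ̄ on a τ̄-neighborhood of t, and every relatively τ̄-open subset of that neighborhood contains a subset of positive μ-measure, then every continuous function y : T → ℝ^d with y t ∈ S t for μ-almost every t satisfies y t ∈ closure(S t) for all t. -/
open MeasureTheory

/-- The liminf of a set-valued mapping at `t`, with respect to the topology `τ'` on `T`. -/
def lsLimInf {T X : Type*} (τ' : TopologicalSpace T) [TopologicalSpace X]
    (S : T → Set X) (t : T) : Set X :=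
  {x | ∀ A : Set X, IsOpen A → x ∈ A → {t' | (S t' ∩ A).Nonempty} ∈ @nhds T τ' t}

/-- The limsup of a set-valued mapping at `t`, with respect to the topology `τ'` on `T`. -/
def lsLimSup {T X : Type*} (τ' : TopologicalSpace T) [TopologicalSpace X]
    (S : T → Set X) (t : T) : Set X :=
  {x | ∀ A : Set X, IsOpen A → x ∈ A →
    ∀ N ∈ @nhds T τ' t, (N ∩ {t' | (S t' ∩ A).Nonempty}).Nonempty}

open Filter Topology Set

/-!
Near `t` every `τ̄`-neighbourhood has positive measure, so it contains points `t'` with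
`y t' ∈ S t'`; since `y` is `τ̄`-continuous, `y t` is therefore a point of the `τ̄`-limsup of `S`
at `t`, which outer semicontinuity places in `closure (S t)`.
-/

theorem lsLimSup_mono {T X : Type*} (τ' : TopologicalSpace T) [TopologicalSpace X]
    {S S' : T → Set X} (h : ∀ s, S s ⊆ S' s) (t : T) :
    lsLimSup τ' S t ⊆ lsLimSup τ' S' t := by
  intro x hx A hA hxA N hN
  obtain ⟨s, hsN, z, hzS, hzA⟩ := hx A hA hxA N hN
  exact ⟨s, hsN, z, h s hzS, hzA⟩

theorem measure_ne_zero_of_mem_nhds_of_forall_isOpen_inter {T : Type*} (τ' : TopologicalSpace T)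
    [MeasurableSpace T] {μ : Measure T} {O : Set T} {t : T}
    (hpos : ∀ U : Set T, IsOpen[τ'] U → (U ∩ O).Nonempty → 0 < μ (U ∩ O)) (htO : t ∈ O)
    {N : Set T} (hN : N ∈ @nhds T τ' t) : μ N ≠ 0 := by
  obtain ⟨U, hUN, hU, htU⟩ := (@mem_nhds_iff T τ' t N).1 hN
  exact fun hN0 => (hpos U hU ⟨t, htU, htO⟩).ne'
    (measure_mono_null (inter_subset_left.trans hUN) hN0)

theorem mem_lsLimSup_of_ae_mem {T X : Type*} (τ' : TopologicalSpace T) [TopologicalSpace X]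
    [MeasurableSpace T] {μ : Measure T} {S : T → Set X} {y : T → X} {t : T}
    (hμ : ∀ N ∈ @nhds T τ' t, μ N ≠ 0) (hy : Tendsto y (@nhds T τ' t) (𝓝 (y t)))
    (hsel : ∀ᵐ s ∂μ, y s ∈ S s) :
    y t ∈ lsLimSup τ' S t := by
  intro A hA hyA N hN
  have hNA : N ∩ y ⁻¹' A ∈ @nhds T τ' t := inter_mem hN (hy (hA.mem_nhds hyA))
  obtain ⟨s, ⟨hsN, hsA⟩, hsS⟩ :=
    μ.exists_mem_of_measure_ne_zero_of_ae (hμ _ hNA) (ae_restrict_of_ae hsel)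
  exact ⟨s, hsN, y s, hsS, hsA⟩

theorem mu_continuous_selection {d : ℕ} {T : Type*} [τ : TopologicalSpace T]
    [MeasurableSpace T] (μ : Measure T) (S : T → Set (Fin d → ℝ))
    (hcont : ∀ t : T, ∃ τ' : TopologicalSpace T, τ' ≤ τ ∧
      ∃ O ∈ @nhds T τ' t,
        (∀ U : Set T, @IsOpen T τ' U → (U ∩ O).Nonempty → 0 < μ (U ∩ O)) ∧
        (∀ t' ∈ O,
          closure (S t') ⊆ lsLimInf τ' (fun s => closure (S s)) t' ∧
          lsLimSup τ' (fun s => closure (S s)) t' ⊆ closure (S t')))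
    (y : T → Fin d → ℝ) (hy : Continuous y)
    (hsel : ∀ᵐ t ∂μ, y t ∈ S t) :
    ∀ t, y t ∈ closure (S t) := by
  intro t
  obtain ⟨τ', hle, O, hO, hpos, hsemicont⟩ := hcont t
  have htO : t ∈ O := @mem_of_mem_nhds T τ' t O hO
  have hy' : Tendsto y (@nhds T τ' t) (𝓝 (y t)) :=
    (continuous_le_dom hle hy).tendsto t
  refine (hsemicont t htO).2 (lsLimSup_mono τ' (fun _ => subset_closure) t ?_)
  exact mem_lsLimSup_of_ae_mem τ'
    (fun _ => measure_ne_zero_of_mem_nhds_of_forall_isOpen_inter τ' hpos htO) hy' hsel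
end

section
/- Let T be a σ-compact locally compact Hausdorff space, S : T → Set ℝ^d convex-valued with C(S) := {y ∈ C₀(T;ℝ^d) | y t ∈ S t ∀t} nonempty. If the support function identity σ_{C(S)}(θ) = ∫ σ_S(dθ/d|θ|) d|θ| holds for all finite ℝ^d-valued regular measures θ, then S is inner semicontinuous. -/
open MeasureTheory Set
open scoped BigOperators

def IsInnerSemicont {T X : Type*} [TopologicalSpace T] [TopologicalSpace X]
    (S : T → Set X) : Prop :=
  ∀ O : Set X, IsOpen O → IsOpen {t | (S t ∩ O).Nonempty}

noncomputable def erealPos (x : EReal) : ENNReal :=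
  if x = ⊤ then ⊤ else ENNReal.ofReal x.toReal

noncomputable def erealIntegral {T : Type*} [MeasurableSpace T]
    (ν : Measure T) (f : T → EReal) : EReal :=
  ((∫⁻ t, erealPos (f t) ∂ν : ENNReal) : EReal) - ((∫⁻ t, erealPos (-(f t)) ∂ν : ENNReal) : EReal)

/-! Testing the support function identity against the Dirac mass at `t₀` with a constant unit
direction `w` gives `σ_{S t₀}(w) ≤ sup_y ⟪y t₀, w⟫` over continuous selections `y`. By
Hahn–Banach, `S t₀` therefore lies in the closure of the convex set `{y t₀}` of selection values.
So every point of `S t₀ ∩ O` is approximated by some `y t₀ ∈ O`, and continuity of `y` keeps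
`y t ∈ S t ∩ O` for `t` near `t₀`. -/

lemma erealPos_sub_erealPos_neg (x : EReal) :
    ((erealPos x : ENNReal) : EReal) - ((erealPos (-x) : ENNReal) : EReal) = x := by
  induction x using EReal.rec with
  | bot => simp [erealPos]
  | top => simp [erealPos]
  | coe r =>
    simp only [erealPos, ← EReal.coe_neg, EReal.coe_ne_top, if_false, EReal.toReal_coe,
      EReal.coe_ennreal_ofReal, ← EReal.coe_sub, EReal.coe_eq_coe_iff]
    rcases le_total 0 r with h | h
    · rw [max_eq_left h, max_eq_right (neg_nonpos.2 h), sub_zero]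
    · rw [max_eq_right h, max_eq_left (neg_nonneg.2 h), zero_sub, neg_neg]

lemma erealIntegral_dirac {T : Type*} [MeasurableSpace T] [MeasurableSingletonClass T]
    (t₀ : T) (f : T → EReal) : erealIntegral (Measure.dirac t₀) f = f t₀ := by
  rw [erealIntegral, lintegral_dirac, lintegral_dirac, erealPos_sub_erealPos_neg]

instance Measure.regular_dirac {T : Type*} [TopologicalSpace T] [T1Space T] [MeasurableSpace T]
    [OpensMeasurableSpace T] (t₀ : T) : (Measure.dirac t₀).Regular where
  outerRegular A _ r hr := by
    by_cases h : t₀ ∈ A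
    · refine ⟨univ, subset_univ A, isOpen_univ, ?_⟩
      rwa [Measure.dirac_apply_of_mem (mem_univ t₀), ← Measure.dirac_apply_of_mem h]
    · refine ⟨{t₀}ᶜ, fun t ht (htt₀ : t = t₀) => h (htt₀ ▸ ht), isOpen_compl_singleton, ?_⟩
      rw [Measure.dirac_apply, indicator_of_notMem (notMem_compl_iff.2 (mem_singleton t₀))]
      rwa [Measure.dirac_apply, indicator_of_notMem h] at hr
  innerRegular U _ r hr := by
    have h : t₀ ∈ U := by
      by_contra h
      rw [Measure.dirac_apply, indicator_of_notMem h] at hr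
      exact ENNReal.not_lt_zero hr
    exact ⟨{t₀}, singleton_subset_iff.2 h, isCompact_singleton,
      by rwa [Measure.dirac_apply_of_mem (mem_singleton t₀), ← Measure.dirac_apply_of_mem h]⟩

lemma IsInnerSemicont.of_subset_closure_range_eval {ι T X : Type*} [TopologicalSpace T]
    [TopologicalSpace X] {S : T → Set X} (y : ι → T → X) (hy : ∀ i, Continuous (y i))
    (hyS : ∀ i t, y i t ∈ S t) (hS : ∀ t, S t ⊆ closure (range fun i => y i t)) :
    IsInnerSemicont S := by
  intro O hO
  refine isOpen_iff_mem_nhds.2 fun t ⟨v, hvS, hvO⟩ => ?_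
  obtain ⟨_, hiO, i, rfl⟩ := mem_closure_iff.1 (hS t hvS) O hO hvO
  filter_upwards [(hy i).continuousAt.preimage_mem_nhds (hO.mem_nhds hiO)] with t' ht'
  exact ⟨y i t', hyS i t', ht'⟩

lemma convex_range_eval_selections {T E : Type*} [TopologicalSpace T] [NormedAddCommGroup E]
    [NormedSpace ℝ E] {S : T → Set E} (hS : ∀ t, Convex ℝ (S t)) (t₀ : T) :
    Convex ℝ (range fun y : {y : ZeroAtInftyContinuousMap T E // ∀ t, y t ∈ S t} => y.1 t₀) := by
  rintro _ ⟨y₁, rfl⟩ _ ⟨y₂, rfl⟩ a b ha hb hab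
  exact ⟨⟨a • y₁.1 + b • y₂.1, fun t => hS t (y₁.2 t) (y₂.2 t) ha hb hab⟩, rfl⟩

lemma exists_norm_eq_one_dotProduct_lt_of_notMem_closure {d : ℕ} {K : Set (Fin d → ℝ)}
    (hK : Convex ℝ K) (hne : K.Nonempty) {x : Fin d → ℝ} (hx : x ∉ closure K) :
    ∃ w : Fin d → ℝ, ‖w‖ = 1 ∧ ∃ u, (∀ a ∈ K, a ⬝ᵥ w < u) ∧ u < x ⬝ᵥ w := by
  obtain ⟨f, u, hfK, hfx⟩ := geometric_hahn_banach_closed_point hK.closure isClosed_closure hx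
  set w : Fin d → ℝ := fun i => f fun j => if i = j then 1 else 0
  have hf (v : Fin d → ℝ) : f v = v ⬝ᵥ w := by
    simpa only [smul_eq_mul, ContinuousLinearMap.coe_coe, dotProduct] using
      (f : (Fin d → ℝ) →ₗ[ℝ] ℝ).pi_apply_eq_sum_univ v
  have hw : w ≠ 0 := by
    obtain ⟨a, ha⟩ := hne
    intro hw
    have := hfK a (subset_closure ha)
    simp only [hf, hw, dotProduct_zero] at this hfx
    linarith
  have hc : 0 < ‖w‖⁻¹ := by positivity
  refine ⟨‖w‖⁻¹ • w, ?_, ‖w‖⁻¹ * u, fun a ha => ?_, ?_⟩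
  · rw [norm_smul, norm_inv, norm_norm, inv_mul_cancel₀ (norm_ne_zero_iff.2 hw)]
  · rw [dotProduct_smul, smul_eq_mul, ← hf]
    exact mul_lt_mul_of_pos_left (hfK a (subset_closure ha)) hc
  · rw [dotProduct_smul, smul_eq_mul, ← hf]
    exact mul_lt_mul_of_pos_left hfx hc

/-- The finite regular vector measure `θ` is encoded by its total variation `ν` and the
a.e. unit-norm density `w = dθ/dν`. -/
theorem isInnerSemicont_of_support_function_representation_general {d : ℕ} {T : Type*}
    [TopologicalSpace T] [T2Space T]
    [MeasurableSpace T] [BorelSpace T]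
    (S : T → Set (Fin d → ℝ)) (hconv : ∀ t, Convex ℝ (S t))
    (hsel : ∃ y : ZeroAtInftyContinuousMap T (Fin d → ℝ), ∀ t, y t ∈ S t)
    (hrep : ∀ ν : Measure T, IsFiniteMeasure ν → ν.Regular →
      ∀ w : T → Fin d → ℝ, Measurable w → (∀ᵐ t ∂ν, ‖w t‖ = 1) →
      (⨆ y : {y : ZeroAtInftyContinuousMap T (Fin d → ℝ) // ∀ t, y t ∈ S t},
          ((∫ t, ∑ i, y.1 t i * w t i ∂ν : ℝ) : EReal))
        = erealIntegral ν (fun t => ⨆ v ∈ S t, ((∑ i, w t i * v i : ℝ) : EReal))) :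
    IsInnerSemicont S := by
  obtain ⟨y₀, hy₀⟩ := hsel
  refine IsInnerSemicont.of_subset_closure_range_eval
    (fun y : {y : ZeroAtInftyContinuousMap T (Fin d → ℝ) // ∀ t, y t ∈ S t} => ⇑y.1)
    (fun y => y.1.continuous) (fun y => y.2) fun t₀ v₀ hv₀ => ?_
  by_contra hv₀K
  obtain ⟨w, hw, u, hK, hu⟩ := exists_norm_eq_one_dotProduct_lt_of_notMem_closure
    (convex_range_eval_selections hconv t₀) ⟨_, ⟨y₀, hy₀⟩, rfl⟩ hv₀K
  have hdirac := hrep (Measure.dirac t₀) inferInstance inferInstance (fun _ => w)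
    measurable_const (ae_of_all _ fun _ => hw)
  simp only [integral_dirac, erealIntegral_dirac] at hdirac
  have hsup_le : (⨆ y : {y : ZeroAtInftyContinuousMap T (Fin d → ℝ) // ∀ t, y t ∈ S t},
      ((y.1 t₀ ⬝ᵥ w : ℝ) : EReal)) ≤ u :=
    iSup_le fun y => EReal.coe_le_coe_iff.2 (hK _ ⟨y, rfl⟩).le
  have hle_sup : ((w ⬝ᵥ v₀ : ℝ) : EReal) ≤ ⨆ v ∈ S t₀, ((w ⬝ᵥ v : ℝ) : EReal) :=
    le_iSup₂_of_le v₀ hv₀ le_rfl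
  have hv₀_le := (hle_sup.trans_eq hdirac.symm).trans hsup_le
  rw [EReal.coe_le_coe_iff, dotProduct_comm] at hv₀_le
  linarith

/-- Necessity of inner semicontinuity for the support function identity: if the identity
`σ_{C(S)}(θ) = ∫ σ_S(dθ/d|θ|) d|θ|` holds for every finite regular vector measure `θ`
(encoded by its total variation `ν` and a.e.-unit-norm density `w`), then `S` is
inner semicontinuous. -/
theorem isInnerSemicont_of_support_function_representation {d : ℕ} {T : Type*}
    [TopologicalSpace T] [SigmaCompactSpace T] [LocallyCompactSpace T] [T2Space T]
    [MeasurableSpace T] [BorelSpace T]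
    (S : T → Set (Fin d → ℝ)) (hconv : ∀ t, Convex ℝ (S t))
    (hsel : ∃ y : ZeroAtInftyContinuousMap T (Fin d → ℝ), ∀ t, y t ∈ S t)
    (hrep : ∀ ν : Measure T, IsFiniteMeasure ν → ν.Regular →
      ∀ w : T → Fin d → ℝ, Measurable w → (∀ᵐ t ∂ν, ‖w t‖ = 1) →
      (⨆ y : {y : ZeroAtInftyContinuousMap T (Fin d → ℝ) // ∀ t, y t ∈ S t},
          ((∫ t, ∑ i, y.1 t i * w t i ∂ν : ℝ) : EReal))
        = erealIntegral ν (fun t => ⨆ v ∈ S t, ((∑ i, w t i * v i : ℝ) : EReal))) :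
    IsInnerSemicont S :=
  isInnerSemicont_of_support_function_representation_general S hconv hsel hrep
end

section
/- Let S : ℝ → Set ℝ^d be a set-valued mapping such that for every y ∈ ℝ^d and every t ∈ ℝ, the distance function t ↦ d(y, S t) is either left-continuous or right-continuous on a neighborhood of t. If μ is a measure on ℝ assigning positive measure to every nonempty open interval, then every continuous function y : ℝ → ℝ^d with y t ∈ S t for μ-a.e. t satisfies y t ∈ closure(S t) for all t. -/
/-!
Since `μ` charges every interval, the selection `y u ∈ S u` holds at points accumulating at `t`
from either side. Along them `infEDist (y t) (S u) ≤ edist (y t) (y u) → 0`, so one-sided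
continuity of the distance function at `t` forces `infEDist (y t) (S t) = 0`.
-/

open EMetric Set MeasureTheory Filter Topology

section Density

variable {α : Type*} [LinearOrder α] [MeasurableSpace α] {μ : Measure α} {p : α → Prop}
  (hμ : ∀ a b : α, a < b → 0 < μ (Ioo a b)) (hp : ∀ᵐ t ∂μ, p t)
include hμ hp

theorem exists_mem_Ioo_of_ae {a b : α} (hab : a < b) : ∃ s ∈ Ioo a b, p s := by
  by_contra! h
  exact (hμ a b hab).ne' (measure_mono_null h (ae_iff.mp hp))

theorem frequently_nhdsLT_of_ae [TopologicalSpace α] [OrderTopology α] [NoMinOrder α]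
    (t : α) : ∃ᶠ s in 𝓝[<] t, p s := fun hnot => by
  obtain ⟨l, hl, hsub⟩ := mem_nhdsLT_iff_exists_Ioo_subset.mp hnot
  obtain ⟨s, hs, hps⟩ := exists_mem_Ioo_of_ae hμ hp hl
  exact hsub hs hps

theorem frequently_nhdsGT_of_ae [TopologicalSpace α] [OrderTopology α] [NoMaxOrder α]
    (t : α) : ∃ᶠ s in 𝓝[>] t, p s := fun hnot => by
  obtain ⟨u, hu, hsub⟩ := mem_nhdsGT_iff_exists_Ioo_subset.mp hnot
  obtain ⟨s, hs, hps⟩ := exists_mem_Ioo_of_ae hμ hp hu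
  exact hsub hs hps

end Density

theorem mem_closure_of_frequently_mem {α X : Type*} [TopologicalSpace α]
    [PseudoEMetricSpace X] {S : α → Set X} {y : α → X} {s : Set α} {t : α}
    (hS : ContinuousWithinAt (fun u => Metric.infEDist (y t) (S u)) s t)
    (hy : ContinuousWithinAt y s t) (hsel : ∃ᶠ u in 𝓝[s] t, y u ∈ S u) :
    y t ∈ closure (S t) := by
  have hdist : Tendsto (fun u => edist (y t) (y u)) (𝓝[s] t) (𝓝 0) := by
    simpa using (tendsto_const_nhds (x := y t)).edist hy
  rw [Metric.mem_closure_iff_infEDist_zero]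
  refine le_antisymm (le_of_tendsto_of_tendsto_of_frequently hS hdist ?_) zero_le
  exact hsel.mono fun u hu => Metric.infEDist_le_edist_of_mem hu

theorem no_removable_discontinuities_selection {d : ℕ}
    (S : ℝ → Set (EuclideanSpace ℝ (Fin d)))
    (hS : ∀ (v : EuclideanSpace ℝ (Fin d)) (t : ℝ), ∃ U ∈ nhds t,
      (∀ s ∈ U, ContinuousWithinAt (fun u => infEdist v (S u)) (Iic s) s) ∨
      (∀ s ∈ U, ContinuousWithinAt (fun u => infEdist v (S u)) (Ici s) s))
    (μ : Measure ℝ) (hμ : ∀ a b : ℝ, a < b → 0 < μ (Ioo a b))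
    (y : ℝ → EuclideanSpace ℝ (Fin d)) (hy : Continuous y)
    (hsel : ∀ᵐ t ∂μ, y t ∈ S t) :
    ∀ t, y t ∈ closure (S t) := by
  intro t
  obtain ⟨U, hU, hleft | hright⟩ := hS (y t) t
  · exact mem_closure_of_frequently_mem (hleft t (mem_of_mem_nhds hU)) hy.continuousWithinAt
      ((frequently_nhdsLT_of_ae hμ hsel t).filter_mono (nhdsWithin_mono t Iio_subset_Iic_self))
  · exact mem_closure_of_frequently_mem (hright t (mem_of_mem_nhds hU)) hy.continuousWithinAt
      ((frequently_nhdsGT_of_ae hμ hsel t).filter_mono (nhdsWithin_mono t Ioi_subset_Ici_self))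
end

section
/- Let T be a topological space in which every point has a neighborhood basis, and let S¹, S² : ℝ^n → Set ℝ^d (with T = ℝ^n Euclidean) be inner semicontinuous convex-valued mappings such that 0 ∈ interior(S¹ t − S² t) for all t. Then t ↦ S¹ t ∩ S² t is inner semicontinuous. -/
/-!
Since `0 ∈ interior (S¹ t - S² t)`, shrinking towards `x` yields finitely many pairs
`pᵢ ∈ S¹ t`, `qᵢ ∈ S² t` close to `x` whose differences are the vertices of a simplex around `0`.
For `tν` near `t`, inner semicontinuity supplies points of `S¹ tν`, `S² tν` close to the `pᵢ`, `qᵢ`;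
the difference `K` of their convex hulls is a compact convex set whose `r`-thickening still covers
a ball of radius `R > r` about `0`. A functional separating `0` from `K` would be at most
`-r‖f‖ + r‖f‖ = 0` somewhere on `K`, so `0 ∈ K`: the two hulls meet near `x`.
-/

open Pointwise Filter

/-- Sequential (Painlevé–Kuratowski) inner semicontinuity on Euclidean spaces:
for every sequence `tseq → t`, `S t ⊆ liminf_ν S (tseq ν)`. -/
def SeqInnerSemicont {n d : ℕ} (S : (Fin n → ℝ) → Set (Fin d → ℝ)) : Prop :=
  ∀ t : Fin n → ℝ, ∀ tseq : ℕ → Fin n → ℝ, Tendsto tseq atTop (nhds t) →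
    ∀ x ∈ S t, ∀ ε : ℝ, 0 < ε →
      ∀ᶠ ν in atTop, (S (tseq ν) ∩ Metric.ball x ε).Nonempty

open Metric Set Topology

section NormedSpace

variable {E : Type*} [NormedAddCommGroup E] [NormedSpace ℝ E]

theorem Convex.zero_mem_closure_of_ball_subset_add_ball {K : Set E} (hK : Convex ℝ K)
    {r R : ℝ} (hR : 0 < R) (hrR : r < R) (hball : ball (0 : E) R ⊆ K + ball 0 r) :
    (0 : E) ∈ closure K := by
  by_contra h0
  obtain ⟨f, u, hf0, hfK⟩ := geometric_hahn_banach_point_closed hK.closure isClosed_closure h0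
  rw [map_zero] at hf0
  obtain ⟨y, hyR, hfy⟩ : ∃ y ∈ ball (0 : E) R, f y ≤ -(r * ‖f‖) := by
    rcases (norm_nonneg f).eq_or_lt with hf | hf
    · exact ⟨0, mem_ball_self hR, by simp [← hf]⟩
    obtain ⟨z, hz, hfz⟩ := f.exists_lt_apply_of_lt_opNorm
      (mul_lt_of_lt_one_left hf ((div_lt_one hR).2 hrR))
    obtain ⟨z, hz, hfz⟩ : ∃ z : E, ‖z‖ < 1 ∧ r / R * ‖f‖ < -f z := by
      rcases lt_abs.1 hfz with h | h
      · exact ⟨-z, by rwa [norm_neg], by rwa [map_neg, neg_neg]⟩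
      · exact ⟨z, hz, h⟩
    refine ⟨R • z, ?_, ?_⟩
    · rw [mem_ball_zero_iff, norm_smul, Real.norm_of_nonneg hR.le]
      exact mul_lt_of_lt_one_right hR hz
    · rw [map_smul, smul_eq_mul]
      have hRz : r * ‖f‖ < R * -f z := (div_lt_iff₀' hR).1 ((div_mul_eq_mul_div r R ‖f‖) ▸ hfz)
      linarith
  obtain ⟨k, hk, w, hw, rfl⟩ := hball hyR
  have hfw : |f w| ≤ r * ‖f‖ := calc
    |f w| ≤ ‖f‖ * ‖w‖ := f.le_opNorm w
    _ ≤ ‖f‖ * r := by gcongr; exact (mem_ball_zero_iff.1 hw).le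
    _ = r * ‖f‖ := mul_comm _ _
  rw [map_add] at hfy
  linarith [hfK k (subset_closure hk), neg_abs_le (f w)]

theorem convexHull_range_inter_nonempty_of_dist_sub_lt {ι : Type*} [Finite ι] {v a b : ι → E}
    {r R : ℝ} (hR : 0 < R) (hrR : r < R) (hv : ball 0 R ⊆ convexHull ℝ (range v))
    (hab : ∀ i, dist (a i - b i) (v i) < r) :
    (convexHull ℝ (range a) ∩ convexHull ℝ (range b)).Nonempty := by
  set K := convexHull ℝ (range a) - convexHull ℝ (range b)
  have hK : Convex ℝ K := (convex_convexHull ℝ _).sub (convex_convexHull ℝ _)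
  have hKc : IsCompact K := by
    simpa only [K, sub_eq_add_neg] using
      ((finite_range a).isCompact_convexHull ℝ).add ((finite_range b).isCompact_convexHull ℝ).neg
  have hvK : range v ⊆ K + ball 0 r := by
    rintro _ ⟨i, rfl⟩
    refine ⟨a i - b i, sub_mem_sub (subset_convexHull ℝ _ (mem_range_self i))
      (subset_convexHull ℝ _ (mem_range_self i)), v i - (a i - b i), ?_, add_sub_cancel _ _⟩
    rw [mem_ball_zero_iff, ← dist_eq_norm, dist_comm]
    exact hab i
  have h0 := hK.zero_mem_closure_of_ball_subset_add_ball hR hrR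
    (hv.trans (convexHull_min hvK (hK.add (convex_ball 0 r))))
  rwa [hKc.isClosed.closure_eq, zero_mem_sub_iff, not_disjoint_iff_nonempty_inter] at h0

variable [FiniteDimensional ℝ E]

theorem Convex.zero_mem_interior_sub_inter_ball {A B : Set E} (hA : Convex ℝ A)
    (hB : Convex ℝ B) {x : E} (hxA : x ∈ A) (hxB : x ∈ B) (h0 : (0 : E) ∈ interior (A - B))
    {ρ : ℝ} (hρ : 0 < ρ) : (0 : E) ∈ interior ((A ∩ ball x ρ) - (B ∩ ball x ρ)) := by
  obtain ⟨b, hb0, hbAB⟩ :=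
    exists_mem_interior_convexHull_affineBasis (mem_interior_iff_mem_nhds.1 h0)
  choose p hp q hq hpq using fun i => hbAB (subset_convexHull ℝ _ (mem_range_self i))
  have hshrink : ∀ y, ∀ᶠ c in 𝓝[>] (0 : ℝ), x + c • (y - x) ∈ ball x ρ := fun y =>
    nhdsWithin_le_nhds <| (Continuous.tendsto' (by fun_prop) 0 x (by simp)).eventually
      (ball_mem_nhds x hρ)
  obtain ⟨c, hc, hc01⟩ := ((eventually_all.2 fun i => (hshrink (p i)).and (hshrink (q i))).and
    (Ioo_mem_nhdsGT one_pos)).exists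
  have hsub : c • convexHull ℝ (range b) ⊆ (A ∩ ball x ρ) - (B ∩ ball x ρ) := by
    rw [← convexHull_smul]
    refine convexHull_min ?_ (((hA.inter (convex_ball x ρ))).sub (hB.inter (convex_ball x ρ)))
    rintro _ ⟨_, ⟨i, rfl⟩, rfl⟩
    refine ⟨x + c • (p i - x), ⟨hA.add_smul_sub_mem hxA (hp i) (Ioo_subset_Icc_self hc01),
      (hc i).1⟩, x + c • (q i - x), ⟨hB.add_smul_sub_mem hxB (hq i) (Ioo_subset_Icc_self hc01),
      (hc i).2⟩, ?_⟩
    rw [← hpq i]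
    module
  refine interior_mono hsub ?_
  rw [interior_smul₀ hc01.1.ne']
  exact zero_mem_smul_set hb0


theorem Convex.exists_finite_stable_inter_ball_nonempty {A B : Set E} (hA : Convex ℝ A)
    (hB : Convex ℝ B) {x : E} (hxA : x ∈ A) (hxB : x ∈ B) (h0 : (0 : E) ∈ interior (A - B))
    {ε : ℝ} (hε : 0 < ε) :
    ∃ P Q : Set E, P.Finite ∧ Q.Finite ∧ P ⊆ A ∧ Q ⊆ B ∧ ∃ η > 0, ∀ A' B' : Set E,
      Convex ℝ A' → Convex ℝ B' → (∀ p ∈ P, (A' ∩ ball p η).Nonempty) →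
      (∀ q ∈ Q, (B' ∩ ball q η).Nonempty) → (A' ∩ B' ∩ ball x ε).Nonempty := by
  obtain ⟨b, hb0, hbAB⟩ := exists_mem_interior_convexHull_affineBasis <|
    mem_interior_iff_mem_nhds.1 (hA.zero_mem_interior_sub_inter_ball hB hxA hxB h0 (half_pos hε))
  obtain ⟨R, hR, hRb⟩ := Metric.mem_nhds_iff.1 (mem_interior_iff_mem_nhds.1 hb0)
  choose p hp q hq hpq using fun i => hbAB (subset_convexHull ℝ _ (mem_range_self i))
  set η := min (ε / 2) (R / 4)
  have hη : 0 < η := by positivity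
  have hnear : ∀ y z, z ∈ ball x (ε / 2) → y ∈ ball z η → y ∈ ball x ε := fun y z hz hy =>
    ball_subset_ball' (by linarith [min_le_left (ε / 2) (R / 4), mem_ball.1 hz]) hy
  refine ⟨range p, range q, finite_range p, finite_range q, range_subset_iff.2 fun i => (hp i).1,
    range_subset_iff.2 fun i => (hq i).1, η, hη, fun A' B' hA' hB' hpA' hqB' => ?_⟩
  choose p' hp'A hp'p using fun i => hpA' (p i) (mem_range_self i)
  choose q' hq'B hq'q using fun i => hqB' (q i) (mem_range_self i)
  have hdist : ∀ i, dist (p' i - q' i) (b i) < 2 * η := fun i => by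
    rw [← hpq i]
    linarith [dist_sub_sub_le (p' i) (q' i) (p i) (q i), mem_ball.1 (hp'p i), mem_ball.1 (hq'q i)]
  obtain ⟨z, hzA, hzB⟩ := convexHull_range_inter_nonempty_of_dist_sub_lt hR
    (by linarith [min_le_right (ε / 2) (R / 4)]) hRb hdist
  exact ⟨z, ⟨convexHull_min (range_subset_iff.2 hp'A) hA' hzA,
    convexHull_min (range_subset_iff.2 hq'B) hB' hzB⟩,
    convexHull_min (range_subset_iff.2 fun i => hnear _ _ (hp i).2 (hp'p i)) (convex_ball x ε) hzA⟩

end NormedSpace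

theorem inter_seqInnerSemicont {n d : ℕ}
    (S1 S2 : (Fin n → ℝ) → Set (Fin d → ℝ))
    (h1 : SeqInnerSemicont S1) (h2 : SeqInnerSemicont S2)
    (hc1 : ∀ t, Convex ℝ (S1 t)) (hc2 : ∀ t, Convex ℝ (S2 t))
    (hint : ∀ t, (0 : Fin d → ℝ) ∈ interior (S1 t - S2 t)) :
    SeqInnerSemicont (fun t => S1 t ∩ S2 t) := by
  intro t tseq htt x ⟨hx1, hx2⟩ ε hε
  obtain ⟨P, Q, hP, hQ, hPS, hQS, η, hη, hstable⟩ :=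
    (hc1 t).exists_finite_stable_inter_ball_nonempty (hc2 t) hx1 hx2 (hint t) hε
  have hP' : ∀ᶠ ν in atTop, ∀ p ∈ P, (S1 (tseq ν) ∩ ball p η).Nonempty :=
    (eventually_all_finite hP).2 fun p hp => h1 t tseq htt p (hPS hp) η hη
  have hQ' : ∀ᶠ ν in atTop, ∀ q ∈ Q, (S2 (tseq ν) ∩ ball q η).Nonempty :=
    (eventually_all_finite hQ).2 fun q hq => h2 t tseq htt q (hQS hq) η hη
  filter_upwards [hP', hQ'] with ν hν1 hν2
  exact hstable _ _ (hc1 _) (hc2 _) hν1 hν2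
end
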